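/- For every natural number n ≥ 1 and every natural number k with 0 ≤ k ≤ 2^n - 2, the Stern polynomials satisfy B_{k+1}(t)·B_{2^n - k}(t) - B_k(t)·B_{2^n - k - 1}(t) = t^n. -/
import Mathlib


open Polynomial

/-- The Stern polynomials: `B 0 = 0`, `B 1 = 1`, `B (2n) = t * B n`,
`B (2n+1) = B n + B (n+1)`. -/
noncomputable def stern : ℕ → Polynomial ℤ
  | 0 => 0
  | 1 => 1
  | n + 2 =>
    if _h : n % 2 = 0 then
      X * stern (n / 2 + 1)
    else
      stern (n / 2 + 1) + stern (n / 2 + 2)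
  decreasing_by all_goals omega

lemma stern_rec (m : ℕ) : stern (m + 2) =
    if m % 2 = 0 then X * stern (m / 2 + 1) else stern (m / 2 + 1) + stern (m / 2 + 2) := by
  rw [stern]
  split <;> simp_all

lemma stern_two_mul (n : ℕ) : stern (2 * n) = X * stern n := by
  cases n with
  | zero => simp [stern]
  | succ m =>
    have h : 2 * (m + 1) = 2 * m + 2 := by ring
    rw [h, stern_rec]
    have h2 : (2 * m) % 2 = 0 := by omega
    have h3 : (2 * m) / 2 = m := by omega
    simp [h2, h3]

lemma stern_two_mul_add_one (n : ℕ) : stern (2 * n + 1) = stern n + stern (n + 1) := by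
  cases n with
  | zero => simp [stern]
  | succ m =>
    have h : 2 * (m + 1) + 1 = (2 * m + 1) + 2 := by ring
    rw [h, stern_rec]
    have h2 : (2 * m + 1) % 2 = 1 := by omega
    have h3 : (2 * m + 1) / 2 = m := by omega
    simp [h2, h3]

lemma stern_aux : ∀ n : ℕ, 1 ≤ n → ∀ k : ℕ, k ≤ 2 ^ n - 1 →
    stern (k + 1) * stern (2 ^ n - k) - stern k * stern (2 ^ n - k - 1) = X ^ n := by
  intro n
  induction n with
  | zero => omega
  | succ n ih =>
    intro _ k hk
    rcases Nat.eq_or_lt_of_le (Nat.one_le_iff_ne_zero.mpr (by omega) : 1 ≤ n + 1) with h1 | h1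
    · -- n + 1 = 1
      have hn0 : n = 0 := by omega
      subst hn0
      interval_cases k <;> simp [stern, pow_succ]
    · have hn1 : 1 ≤ n := by omega
      have hpow : 2 ^ (n + 1) = 2 * 2 ^ n := by ring
      have h2n : 2 ≤ 2 ^ n := by
        calc 2 = 2 ^ 1 := by norm_num
        _ ≤ 2 ^ n := Nat.pow_le_pow_right (by norm_num) hn1
      rcases Nat.even_or_odd k with ⟨j, hj⟩ | ⟨j, hj⟩
      · -- k = 2 j
        subst hj
        have hjle : j ≤ 2 ^ n - 1 := by omega
        obtain ⟨a, ha⟩ : ∃ a, 2 ^ n = j + a + 1 := ⟨2 ^ n - j - 1, by omega⟩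
        have e1 : j + j + 1 = 2 * j + 1 := by ring
        have e2 : 2 ^ (n + 1) - (j + j) = 2 * (a + 1) := by omega
        have e3 : j + j = 2 * j := by ring
        have e4 : 2 * (a + 1) - 1 = 2 * a + 1 := by omega
        rw [e1, e2, e3, e4]
        simp only [stern_two_mul, stern_two_mul_add_one]
        have ihj := ih hn1 j hjle
        have e5 : 2 ^ n - j = a + 1 := by omega
        have e6 : a + 1 - 1 = a := by omega
        rw [e5, e6] at ihj
        calc (stern j + stern (j + 1)) * (X * stern (a + 1)) -
              X * stern j * (stern a + stern (a + 1))
            = X * (stern (j + 1) * stern (a + 1) - stern j * stern a) := by ring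
          _ = X * X ^ n := by rw [ihj]
          _ = X ^ (n + 1) := by ring
      · -- k = 2 j + 1
        subst hj
        have hjle : j ≤ 2 ^ n - 1 := by omega
        obtain ⟨a, ha⟩ : ∃ a, 2 ^ n = j + a + 1 := ⟨2 ^ n - j - 1, by omega⟩
        have e1 : 2 * j + 1 + 1 = 2 * (j + 1) := by ring
        have e2 : 2 ^ (n + 1) - (2 * j + 1) = 2 * a + 1 := by omega
        have e4 : 2 * a + 1 - 1 = 2 * a := by omega
        rw [e1, e2, e4]
        simp only [stern_two_mul, stern_two_mul_add_one]
        have ihj := ih hn1 j hjle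
        have e5 : 2 ^ n - j = a + 1 := by omega
        have e6 : a + 1 - 1 = a := by omega
        rw [e5, e6] at ihj
        calc X * stern (j + 1) * (stern a + stern (a + 1)) -
              (stern j + stern (j + 1)) * (X * stern a)
            = X * (stern (j + 1) * stern (a + 1) - stern j * stern a) := by ring
          _ = X * X ^ n := by rw [ihj]
          _ = X ^ (n + 1) := by ring

theorem stern_det_identity (n k : ℕ) (hn : 1 ≤ n) (hk : k ≤ 2 ^ n - 2) :
    stern (k + 1) * stern (2 ^ n - k) - stern k * stern (2 ^ n - k - 1) = X ^ n := by
  exact stern_aux n hn k (by omega)
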